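/- The real Haagerup function h(x) = x ∫₀^{π/2} cos²t / (1 − x² sin²t)^{1/2} dt is a strictly increasing continuous bijection from [−1, 1] onto [−1, 1], with h(1) = 1. -/
import Mathlib


open Real
open MeasureTheory Set Filter

/-- The real Haagerup function. -/
noncomputable def haagerupReal (x : ℝ) : ℝ :=
  x * ∫ t in (0:ℝ)..(π / 2), Real.cos t ^ 2 / Real.sqrt (1 - x ^ 2 * Real.sin t ^ 2)

namespace HaagerupAux

noncomputable def F (x t : ℝ) : ℝ := Real.cos t ^ 2 / Real.sqrt (1 - x ^ 2 * Real.sin t ^ 2)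

lemma F_nonneg (x t : ℝ) : 0 ≤ F x t := div_nonneg (sq_nonneg _) (Real.sqrt_nonneg _)

lemma sq_le_one {x : ℝ} (hx : x ∈ Icc (-1:ℝ) 1) : x ^ 2 ≤ 1 := by
  obtain ⟨h1, h2⟩ := hx; nlinarith

lemma F_le (x : ℝ) (hx : x ^ 2 ≤ 1) (t : ℝ) : F x t ≤ |Real.cos t| := by
  have h1 : Real.cos t ^ 2 ≤ 1 - x ^ 2 * Real.sin t ^ 2 := by
    nlinarith [Real.sin_sq_add_cos_sq t, sq_nonneg (Real.sin t), sq_nonneg x]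
  have h2 : |Real.cos t| ≤ Real.sqrt (1 - x ^ 2 * Real.sin t ^ 2) := by
    rw [← Real.sqrt_sq_eq_abs]; exact Real.sqrt_le_sqrt h1
  rcases eq_or_ne (Real.cos t) 0 with h | h
  · simp [F, h]
  · have hpos : 0 < |Real.cos t| := abs_pos.mpr h
    calc F x t ≤ Real.cos t ^ 2 / |Real.cos t| :=
          div_le_div_of_nonneg_left (sq_nonneg _) hpos h2
      _ = |Real.cos t| := by
          rw [← sq_abs, pow_two, mul_div_assoc, div_self hpos.ne', mul_one]

lemma F_one (x : ℝ) (hx : x ^ 2 = 1) (t : ℝ) : F x t = |Real.cos t| := by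
  have h1 : 1 - x ^ 2 * Real.sin t ^ 2 = Real.cos t ^ 2 := by
    rw [hx]; nlinarith [Real.sin_sq_add_cos_sq t]
  rw [F, h1, Real.sqrt_sq_eq_abs]
  rcases eq_or_ne (Real.cos t) 0 with h | h
  · simp [h]
  · rw [← sq_abs, pow_two, mul_div_assoc, div_self (abs_pos.mpr h).ne', mul_one]

lemma denom_pos {x t : ℝ} (hx : x ^ 2 ≤ 1) (ht : Real.sin t ^ 2 < 1) :
    0 < Real.sqrt (1 - x ^ 2 * Real.sin t ^ 2) := by
  apply Real.sqrt_pos.mpr; nlinarith [sq_nonneg (Real.sin t), sq_nonneg x]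

lemma F_cont {x : ℝ} (hx : x ∈ Icc (-1:ℝ) 1) : Continuous (fun t => F x t) := by
  rcases (sq_le_one hx).lt_or_eq with h | h
  · apply Continuous.div (by continuity) (Real.continuous_sqrt.comp (by continuity))
    intro t
    have : 0 < Real.sqrt (1 - x ^ 2 * Real.sin t ^ 2) := by
      apply Real.sqrt_pos.mpr
      nlinarith [Real.sin_sq_le_one t, sq_nonneg x]
    exact this.ne'
  · have : (fun t => F x t) = fun t => |Real.cos t| := funext (F_one x h)
    rw [this]; exact continuous_abs.comp Real.continuous_cos

lemma F_intg {x : ℝ} (hx : x ∈ Icc (-1:ℝ) 1) :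
    IntervalIntegrable (fun t => F x t) volume 0 (π / 2) :=
  (F_cont hx).intervalIntegrable _ _

lemma key_lt {x y t : ℝ} (hx : -1 ≤ x) (hy : y ≤ 1) (hxy : x < y)
    (ht : t ∈ Ioo 0 (π / 2)) : x * F x t < y * F y t := by
  obtain ⟨ht1, ht2⟩ := ht
  have hc : 0 < Real.cos t := Real.cos_pos_of_mem_Ioo ⟨by linarith [Real.pi_pos], ht2⟩
  have hs : 0 < Real.sin t := Real.sin_pos_of_pos_of_lt_pi ht1 (by linarith [Real.pi_pos])
  have hs1 : Real.sin t ^ 2 < 1 := by nlinarith [Real.sin_sq_add_cos_sq t]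
  have hx2 : x ^ 2 ≤ 1 := by nlinarith
  have hy2 : y ^ 2 ≤ 1 := by nlinarith
  have hdx : 0 < Real.sqrt (1 - x ^ 2 * Real.sin t ^ 2) := denom_pos hx2 hs1
  have hdy : 0 < Real.sqrt (1 - y ^ 2 * Real.sin t ^ 2) := denom_pos hy2 hs1
  set dx := Real.sqrt (1 - x ^ 2 * Real.sin t ^ 2) with hdxdef
  set dy := Real.sqrt (1 - y ^ 2 * Real.sin t ^ 2) with hdydef
  have hkey : x * dy < y * dx := by
    rcases le_or_gt 0 x with h0 | h0
    · have hxy2 : x ^ 2 ≤ y ^ 2 := by nlinarith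
      have hdd : dy ≤ dx := Real.sqrt_le_sqrt
        (by nlinarith [mul_le_mul_of_nonneg_right hxy2 (sq_nonneg (Real.sin t))])
      calc x * dy ≤ x * dx := by nlinarith
        _ < y * dx := by nlinarith
    · rcases le_or_gt y 0 with h1 | h1
      · have hyx2 : y ^ 2 ≤ x ^ 2 := by nlinarith
        have hdd : dx ≤ dy := Real.sqrt_le_sqrt
          (by nlinarith [mul_le_mul_of_nonneg_right hyx2 (sq_nonneg (Real.sin t))])
        calc x * dy ≤ x * dx := by nlinarith
          _ < y * dx := by nlinarith
      · have : x * dy < 0 := mul_neg_of_neg_of_pos h0 hdy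
        have : 0 < y * dx := mul_pos h1 hdx
        linarith
  show x * (Real.cos t ^ 2 / dx) < y * (Real.cos t ^ 2 / dy)
  rw [← mul_div_assoc, ← mul_div_assoc, div_lt_div_iff₀ hdx hdy]
  nlinarith [mul_lt_mul_of_pos_right hkey (pow_pos hc 2)]

lemma integral_F_one : (∫ t in (0:ℝ)..(π / 2), F 1 t) = 1 := by
  rw [intervalIntegral.integral_congr (g := Real.cos) ?_]
  · rw [integral_cos]; simp
  · intro t ht
    rw [uIcc_of_le (by positivity)] at ht
    have hc : 0 ≤ Real.cos t :=
      Real.cos_nonneg_of_mem_Icc ⟨by linarith [ht.1, Real.pi_pos], ht.2⟩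
    rw [F_one 1 (by norm_num) t, abs_of_nonneg hc]

lemma haagerup_eq (x : ℝ) : haagerupReal x = x * ∫ t in (0:ℝ)..(π / 2), F x t := rfl

lemma haagerup_one : haagerupReal 1 = 1 := by
  rw [haagerup_eq, integral_F_one, one_mul]

lemma haagerup_neg_one : haagerupReal (-1) = -1 := by
  rw [haagerup_eq]
  have : (fun t => F (-1) t) = fun t => F 1 t := by
    funext t; simp [F]
  rw [show (∫ t in (0:ℝ)..(π / 2), F (-1) t) = ∫ t in (0:ℝ)..(π / 2), F 1 t from by rw [this],
    integral_F_one]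
  norm_num

lemma strictMono : StrictMonoOn haagerupReal (Icc (-1:ℝ) 1) := by
  intro x hx y hy hxy
  have hix : IntervalIntegrable (fun t => x * F x t) volume 0 (π / 2) :=
    (F_intg hx).const_mul x
  have hiy : IntervalIntegrable (fun t => y * F y t) volume 0 (π / 2) :=
    (F_intg hy).const_mul y
  have hdiff : haagerupReal y - haagerupReal x
      = ∫ t in (0:ℝ)..(π / 2), (y * F y t - x * F x t) := by
    rw [intervalIntegral.integral_sub hiy hix, intervalIntegral.integral_const_mul,
      intervalIntegral.integral_const_mul, haagerup_eq, haagerup_eq]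
  have hpos : 0 < ∫ t in (0:ℝ)..(π / 2), (y * F y t - x * F x t) := by
    apply intervalIntegral.intervalIntegral_pos_of_pos_on (hiy.sub hix)
    · intro t ht
      have := key_lt hx.1 hy.2 hxy ht
      linarith
    · positivity
  linarith [hdiff ▸ hpos]

lemma contOn : ContinuousOn haagerupReal (Icc (-1:ℝ) 1) := by
  have hInt : ContinuousOn (fun x => ∫ t in (0:ℝ)..(π / 2), F x t) (Icc (-1:ℝ) 1) := by
    intro x₀ hx₀
    apply intervalIntegral.continuousWithinAt_of_dominated_interval
      (bound := fun _ => (1:ℝ))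
    · filter_upwards [self_mem_nhdsWithin] with x hx
      exact ((F_cont hx).aestronglyMeasurable).restrict
    · filter_upwards [self_mem_nhdsWithin] with x hx
      filter_upwards with t _
      rw [Real.norm_eq_abs, abs_of_nonneg (F_nonneg x t)]
      exact (F_le x (sq_le_one hx) t).trans (Real.abs_cos_le_one t)
    · exact intervalIntegrable_const
    · have h0 : ∀ᵐ t : ℝ, t ≠ π / 2 := by
        rw [ae_iff]
        simp [measure_singleton]
      filter_upwards [h0] with t ht htI
      rw [uIoc_of_le (by positivity)] at htI
      have hs1 : Real.sin t ^ 2 < 1 := by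
        have htlt : t < π / 2 := lt_of_le_of_ne htI.2 ht
        have hc : 0 < Real.cos t := Real.cos_pos_of_mem_Ioo
          ⟨by linarith [htI.1, Real.pi_pos], htlt⟩
        nlinarith [Real.sin_sq_add_cos_sq t]
      apply ContinuousWithinAt.div continuousWithinAt_const
      · exact (Real.continuous_sqrt.comp (by continuity)).continuousWithinAt
      · exact (denom_pos (sq_le_one hx₀) hs1).ne'
  exact continuousOn_id.mul hInt

end HaagerupAux

theorem haagerupReal_strictMono_bijection :
    StrictMonoOn haagerupReal (Set.Icc (-1 : ℝ) 1) ∧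
    ContinuousOn haagerupReal (Set.Icc (-1 : ℝ) 1) ∧
    Set.BijOn haagerupReal (Set.Icc (-1 : ℝ) 1) (Set.Icc (-1 : ℝ) 1) ∧
    haagerupReal 1 = 1 := by
  refine ⟨HaagerupAux.strictMono, HaagerupAux.contOn, ⟨?_, ?_, ?_⟩, HaagerupAux.haagerup_one⟩
  · intro x hx
    have hmono := HaagerupAux.strictMono.monotoneOn
    have h1 : haagerupReal (-1) ≤ haagerupReal x :=
      hmono (by simp) hx hx.1
    have h2 : haagerupReal x ≤ haagerupReal 1 :=
      hmono hx (by simp) hx.2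
    rw [HaagerupAux.haagerup_neg_one] at h1
    rw [HaagerupAux.haagerup_one] at h2
    exact ⟨h1, h2⟩
  · exact HaagerupAux.strictMono.injOn
  · have := intermediate_value_Icc (by norm_num : (-1:ℝ) ≤ 1) HaagerupAux.contOn
    rw [HaagerupAux.haagerup_neg_one, HaagerupAux.haagerup_one] at this
    exact this
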